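/- Let s ≥ 2 and k ≥ 1 be integers, let θ be a bijection of the k-blocks (Fin k → Fin s) with θ (fun _ => 0) ≠ (fun _ => s − 1), and let F : ℝ → ℝ satisfy: for every admissible digit sequence a, F(∑_{n=0}^∞ a n / s^{n+1}) = ∑_{n=0}^∞ (Θ a) n / s^{n+1}. Suppose θ has exactly one fixed block σ (θ σ = σ and every block b with θ b = b equals σ), and σ is not the constant block s − 1. Then the set of invariant points of F in [0,1) is the singleton { x ∈ [0,1) : F x = x } = { ∑_{n=0}^∞ σ(n mod k) / s^{n+1} }, the number whose s-adic expansion is the periodic repetition of the block σ. (Paper's Lemma 8, second case.) -/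

import Mathlib

/-!
Write `x = 0.a₀a₁a₂…` in base `s` with admissible digits. Admissible expansions are strictly
increasing in the lexicographic order, hence unique. If `F x = x`, then `x` has the two expansions
`a` and `Θ a`. Should `Θ a` end in `s − 1`s, `a` must end in `0`s, and comparing a late block
gives `θ 0 = s − 1`, which is excluded; so `Θ a` is admissible, `Θ a = a` by uniqueness, every
block of `a` is a fixed block of `θ`, i.e. `σ`, and `x` is the periodic number. Conversely the
periodic expansion of `σ` is admissible because `σ` is not the constant block `s − 1`, and it is
fixed by `Θ`.
-/

open Real

namespace SAdic

variable {s : ℕ}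

def Admissible (a : ℕ → Fin s) : Prop :=
  ¬ ∃ N, ∀ n ≥ N, (a n : ℕ) = s - 1

lemma Admissible.exists_lt {a : ℕ → Fin s} (ha : Admissible a) (N : ℕ) :
    ∃ n ≥ N, (a n : ℕ) < s - 1 := by
  by_contra! h
  exact ha ⟨N, fun n hn => by have := (a n).isLt; have := h n hn; omega⟩

lemma Admissible.shift {a : ℕ → Fin s} (ha : Admissible a) (m : ℕ) :
    Admissible (fun n => a (n + m)) := by
  rintro ⟨N, hN⟩
  refine ha ⟨N + m, fun n hn => ?_⟩
  simpa [Nat.sub_add_cancel (by omega : m ≤ n)] using hN (n - m) (by omega)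

lemma tsum_div_pow_eq_ofDigits (a : ℕ → Fin s) :
    ∑' n : ℕ, ((a n : ℕ) : ℝ) / (s : ℝ) ^ (n + 1) = ofDigits a := by
  simp only [ofDigits, ofDigitsTerm, div_eq_mul_inv]

lemma eq_zero_of_ofDigits_eq_zero {a : ℕ → Fin s} (h : ofDigits a = 0) (n : ℕ) :
    (a n : ℕ) = 0 := by
  have hsum : HasSum (ofDigitsTerm a) 0 := h ▸ summable_ofDigitsTerm.hasSum
  have hterm := congrFun ((hasSum_zero_iff_of_nonneg fun _ => ofDigitsTerm_nonneg).1 hsum) n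
  have : (0 : ℝ) < s := by exact_mod_cast (a 0).pos
  simpa [ofDigitsTerm, this.ne'] using hterm

lemma ofDigits_lt_one {a : ℕ → Fin s} (ha : Admissible a) : ofDigits a < 1 := by
  obtain ⟨m, -, hm⟩ := ha.exists_lt 0
  rw [← ofDigits_const_last_eq_one' (by omega : 1 < s)]
  refine Summable.tsum_lt_tsum (i := m) (fun n => ?_) ?_ summable_ofDigitsTerm
    summable_ofDigitsTerm
  · unfold ofDigitsTerm
    gcongr
    exact_mod_cast Nat.le_sub_one_of_lt (a n).isLt
  · have : (0 : ℝ) < s := by exact_mod_cast (a 0).pos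
    exact mul_lt_mul_of_pos_right (by exact_mod_cast hm) (by positivity)

lemma ofDigits_add_le_of_lt {a b : ℕ → Fin s} {n : ℕ} (hpre : ∀ i < n, a i = b i)
    (hn : a n < b n) :
    ofDigits a + ((s : ℝ) ^ (n + 1))⁻¹ *
        (1 + ofDigits (fun i => b (i + (n + 1))) - ofDigits (fun i => a (i + (n + 1)))) ≤
      ofDigits b := by
  have hhead : ∑ i ∈ Finset.range n, ofDigitsTerm a i = ∑ i ∈ Finset.range n, ofDigitsTerm b i :=
    Finset.sum_congr rfl fun i hi => by rw [ofDigitsTerm, hpre i (Finset.mem_range.mp hi)]; rfl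
  have hdigit : ((a n : ℕ) : ℝ) + 1 ≤ (b n : ℕ) := by exact_mod_cast hn
  have hp : (0 : ℝ) ≤ ((s : ℝ) ^ (n + 1))⁻¹ := by positivity
  rw [ofDigits_eq_sum_add_ofDigits a (n + 1), ofDigits_eq_sum_add_ofDigits b (n + 1),
    Finset.sum_range_succ, Finset.sum_range_succ, hhead]
  simp only [ofDigitsTerm]
  nlinarith

lemma ofDigits_lt_ofDigits {a b : ℕ → Fin s} (ha : Admissible a) (hab : toLex a < toLex b) :
    ofDigits a < ofDigits b := by
  obtain ⟨n, hpre, hn⟩ : ∃ n, (∀ i < n, a i = b i) ∧ a n < b n := hab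
  refine lt_of_lt_of_le ?_ (ofDigits_add_le_of_lt hpre hn)
  have htail_a := ofDigits_lt_one (ha.shift (n + 1))
  have htail_b := ofDigits_nonneg (fun i => b (i + (n + 1)))
  have hp : (0 : ℝ) < ((s : ℝ) ^ (n + 1))⁻¹ := by
    have : (0 : ℝ) < s := by exact_mod_cast (a 0).pos
    positivity
  nlinarith

lemma eq_of_ofDigits_eq {a b : ℕ → Fin s} (ha : Admissible a) (hb : Admissible b)
    (h : ofDigits a = ofDigits b) : a = b := by
  rcases lt_trichotomy (toLex a) (toLex b) with hab | hab | hab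
  · exact absurd h (ofDigits_lt_ofDigits ha hab).ne
  · exact toLex_inj.1 hab
  · exact absurd h (ofDigits_lt_ofDigits hb hab).ne'

lemma eventually_eq_zero_of_ofDigits_eq {a c : ℕ → Fin s} (ha : Admissible a)
    (hc : ¬ Admissible c) (h : ofDigits a = ofDigits c) : ∃ N, ∀ n ≥ N, (a n : ℕ) = 0 := by
  have hca : toLex c < toLex a := by
    rcases lt_trichotomy (toLex a) (toLex c) with hac | hac | hac
    · exact absurd h (ofDigits_lt_ofDigits ha hac).ne
    · exact absurd (toLex_inj.1 hac ▸ ha) hc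
    · exact hac
  obtain ⟨n, hpre, hn⟩ : ∃ n, (∀ i < n, c i = a i) ∧ c n < a n := hca
  have hgap := ofDigits_add_le_of_lt hpre hn
  have htail_c := ofDigits_le_one (fun i => c (i + (n + 1)))
  have htail_a := ofDigits_nonneg (fun i => a (i + (n + 1)))
  have hp : (0 : ℝ) < ((s : ℝ) ^ (n + 1))⁻¹ := by
    have : (0 : ℝ) < s := by exact_mod_cast (a 0).pos
    positivity
  have hzero : ofDigits (fun i => a (i + (n + 1))) = 0 := by nlinarith
  refine ⟨n + 1, fun m hm => ?_⟩
  simpa [Nat.sub_add_cancel hm] using eq_zero_of_ofDigits_eq_zero hzero (m - (n + 1))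

lemma admissible_digits [NeZero s] (hs : 1 < s) {x : ℝ} (hx : x ∈ Set.Ico 0 1) :
    Admissible (digits x s) := by
  rintro ⟨N, hN⟩
  have htail : ofDigits (fun i => digits x s (i + N)) = 1 := by
    rw [← ofDigits_const_last_eq_one' hs]
    exact congrArg ofDigits (funext fun i => Fin.ext (hN _ (by omega)))
  have hsplit := ofDigits_eq_sum_add_ofDigits (digits x s) N
  rw [ofDigits_digits hs hx, htail, mul_one] at hsplit
  have hfloor := ofDigits_digits_sum_eq (b := s) hx N
  have hpos : (0 : ℝ) < (s : ℝ) ^ N := by positivity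
  have hscaled : (s : ℝ) ^ N * x = ⌊(s : ℝ) ^ N * x⌋₊ + 1 := by
    conv_lhs => rw [hsplit]
    rw [← hfloor, mul_add, mul_inv_cancel₀ hpos.ne']
  linarith [Nat.lt_floor_add_one ((s : ℝ) ^ N * x)]

section Blocks

variable {α : Type*} {k : ℕ}

def block (k : ℕ) (a : ℕ → α) (m : ℕ) : Fin k → α :=
  fun j => a (k * m + j)

def repeatBlock (hk : 0 < k) (σ : Fin k → α) : ℕ → α :=
  fun n => σ ⟨n % k, Nat.mod_lt n hk⟩

lemma block_repeatBlock (hk : 0 < k) (σ : Fin k → α) (m : ℕ) :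
    block k (repeatBlock hk σ) m = σ := by
  funext j
  simp [block, repeatBlock, Nat.mod_eq_of_lt j.isLt]

lemma ext_block (hk : 0 < k) {a b : ℕ → α} (h : ∀ m, block k a m = block k b m) : a = b := by
  funext n
  simpa only [block, Nat.div_add_mod] using congrFun (h (n / k)) ⟨n % k, Nat.mod_lt n hk⟩

lemma apply_eq_self_iff_eq_repeatBlock (hk : 0 < k) {θ : (Fin k → α) → Fin k → α}
    {Θ : (ℕ → α) → ℕ → α} (hΘ : ∀ a m, block k (Θ a) m = θ (block k a m)) {σ : Fin k → α}
    (hσ : θ σ = σ) (hσ_unique : ∀ b, θ b = b → b = σ) {a : ℕ → α} :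
    Θ a = a ↔ a = repeatBlock hk σ := by
  constructor
  · intro h
    refine ext_block hk fun m => ?_
    rw [block_repeatBlock]
    exact hσ_unique _ (by rw [← hΘ, h])
  · rintro rfl
    exact ext_block hk fun m => by rw [hΘ, block_repeatBlock, hσ]

lemma admissible_repeatBlock (hk : 0 < k) {σ : Fin k → Fin s} {j : Fin k}
    (hj : (σ j : ℕ) ≠ s - 1) : Admissible (repeatBlock hk σ) := by
  rintro ⟨N, hN⟩
  have hdigit := congrFun (block_repeatBlock hk σ N) j
  exact hj (hdigit ▸ hN _ (by have := Nat.le_mul_of_pos_left N hk; omega))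

lemma apply_zero_block_eq_of_not_admissible (hk : 0 < k) (hs : 0 < s)
    {θ : (Fin k → Fin s) → Fin k → Fin s} {Θ : (ℕ → Fin s) → ℕ → Fin s}
    (hΘ : ∀ a m, block k (Θ a) m = θ (block k a m)) {a : ℕ → Fin s} (ha : Admissible a)
    (hΘa : ¬ Admissible (Θ a)) (h : ofDigits a = ofDigits (Θ a)) :
    θ (fun _ => ⟨0, hs⟩) = fun _ => ⟨s - 1, Nat.sub_lt hs one_pos⟩ := by
  obtain ⟨N, hN⟩ := eventually_eq_zero_of_ofDigits_eq ha hΘa h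
  obtain ⟨M, hM⟩ := not_not.1 hΘa
  have hlate := Nat.le_mul_of_pos_left (N + M) hk
  have hzero : block k a (N + M) = fun _ => ⟨0, hs⟩ :=
    funext fun j => Fin.ext (hN _ (by omega))
  rw [← hzero, ← hΘ]
  exact funext fun j => Fin.ext (hM _ (by omega))

end Blocks

end SAdic

open SAdic

theorem stmt_9 (s k : ℕ) (hs : 2 ≤ s) (hk : 1 ≤ k)
    (θ : (Fin k → Fin s) ≃ (Fin k → Fin s))
    (hθ0 : θ (fun _ => ⟨0, by omega⟩) ≠ (fun _ => ⟨s - 1, by omega⟩))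
    (Θ : (ℕ → Fin s) → (ℕ → Fin s))
    (hΘ : ∀ (a : ℕ → Fin s) (m : ℕ) (i : Fin k),
      Θ a (k * m + (i : ℕ)) = θ (fun j => a (k * m + (j : ℕ))) i)
    (F : ℝ → ℝ)
    (hF : ∀ a : ℕ → Fin s, (¬ ∃ N, ∀ n ≥ N, (a n : ℕ) = s - 1) →
      F (∑' n : ℕ, ((a n : ℕ) : ℝ) / (s : ℝ) ^ (n + 1)) =
        ∑' n : ℕ, ((Θ a n : ℕ) : ℝ) / (s : ℝ) ^ (n + 1))
    (σ : Fin k → Fin s) (hσfix : θ σ = σ)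
    (hσuniq : ∀ b : Fin k → Fin s, θ b = b → b = σ)
    (hσne : σ ≠ (fun _ => ⟨s - 1, by omega⟩)) :
    {x ∈ Set.Ico (0 : ℝ) 1 | F x = x} =
      {∑' n : ℕ, ((σ ⟨n % k, Nat.mod_lt n (by omega)⟩ : ℕ) : ℝ) / (s : ℝ) ^ (n + 1)} := by
  have : NeZero s := ⟨by omega⟩
  have hblock : ∀ a m, block k (Θ a) m = θ (block k a m) := fun a m => funext (hΘ a m)
  have hfix a := apply_eq_self_iff_eq_repeatBlock hk hblock hσfix hσuniq (a := a)
  obtain ⟨j, hj⟩ : ∃ j, (σ j : ℕ) ≠ s - 1 := by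
    by_contra! h
    exact hσne (funext fun j => Fin.ext (h j))
  have hσ_adm := admissible_repeatBlock hk hj
  simp_rw [tsum_div_pow_eq_ofDigits] at hF ⊢
  change {x ∈ Set.Ico (0 : ℝ) 1 | F x = x} = {ofDigits (repeatBlock hk σ)}
  ext x
  constructor
  · rintro ⟨hx, hFx⟩
    have ha := admissible_digits hs hx
    have hxa := ofDigits_digits hs hx
    have hΘx : ofDigits (digits x s) = ofDigits (Θ (digits x s)) := by rw [← hF _ ha, hxa, hFx]
    have hΘa : Admissible (Θ (digits x s)) := fun h =>
      hθ0 (apply_zero_block_eq_of_not_admissible hk (by omega) hblock ha (not_not_intro h) hΘx)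
    rw [Set.mem_singleton_iff, ← hxa, ← (hfix _).1 (eq_of_ofDigits_eq hΘa ha hΘx.symm)]
  · rintro rfl
    exact ⟨⟨ofDigits_nonneg _, ofDigits_lt_one hσ_adm⟩, by rw [hF _ hσ_adm, (hfix _).2 rfl]⟩
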